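/- arXiv:math/0609795 — 2 statements merged into one kernel-verified Lean document; each statement's English description precedes it below -/
import Mathlib

section
/- If ν is a k-pseudorandom measure on Z/NZ, then ‖ν − 1‖_{U^k} = o(1) as N → ∞; i.e., for every ε > 0 there is N₀ such that for all primes N > N₀, ‖ν − 1‖_{U^k} ≤ ε. -/
/-- `‖f‖_{U^k}^{2^k}`, the closed-formula Gowers quantity. -/
noncomputable def gowersPow (N : ℕ) [NeZero N] (k : ℕ) (f : ZMod N → ℝ) : ℝ :=
  (∑ x : ZMod N, ∑ t : Fin k → ZMod N,
    ∏ ω : Fin k → Bool, f (x + ∑ j, if ω j then t j else 0)) / ((N : ℝ) * (N : ℝ) ^ k)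

/-- The Gowers uniformity norm `‖f‖_{U^k}`. -/
noncomputable def gowersNorm (N : ℕ) [NeZero N] (k : ℕ) (f : ZMod N → ℝ) : ℝ :=
  gowersPow N k f ^ ((1 : ℝ) / 2 ^ k)

/-- The Green–Tao linear forms condition, for a family `ν = ν_N` of weights indexed by
(prime) `N`, with parameters `m₀` (number of forms), `t₀` (number of variables) and `L`
(size of the coefficients):  for every system `ψ_i(x) = b_i + ∑_j L_{ij} x_j`, `i < m ≤ m₀`,
of affine forms in `t ≤ t₀` variables, with integer coefficients bounded by `L`, whose
coefficient vectors are nonzero and pairwise non-proportional (over ℚ), one has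
`E(∏_i ν(ψ_i(x)) | x ∈ Z_N^t) = 1 + o(1)` as `N → ∞`, uniformly in the system. -/
def LinearFormsCondition (m₀ t₀ L : ℕ) (ν : ∀ N : ℕ, ZMod N → ℝ) : Prop :=
  ∀ ε : ℝ, 0 < ε → ∃ N₀ : ℕ, ∀ N : ℕ, ∀ hN : N.Prime, N₀ < N →
    haveI : NeZero N := ⟨hN.pos.ne'⟩
    ∀ m t : ℕ, 0 < m → m ≤ m₀ → 0 < t → t ≤ t₀ →
      ∀ (b : Fin m → ZMod N) (L' : Fin m → Fin t → ℤ),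
        (∀ i j, |L' i j| ≤ (L : ℤ)) →
        (∀ i, L' i ≠ 0) →
        (∀ i i', i ≠ i' →
          ∀ q : ℚ, (fun j => (L' i j : ℚ)) ≠ fun j => q * (L' i' j : ℚ)) →
        |(∑ x : Fin t → ZMod N,
            ∏ i, ν N (b i + ∑ j, (L' i j : ZMod N) * x j)) / (N : ℝ) ^ t - 1| ≤ ε

set_option maxHeartbeats 1600000 in
/-- If `ν` is a `k`-pseudorandom family of measures (in particular it satisfies the
linear forms condition with the Green–Tao parameters), then `‖ν - 1‖_{U^k} = o(1)`:
for every `ε > 0` there is `N₀` such that `‖ν_N - 1‖_{U^k} ≤ ε` for all primes `N > N₀`. -/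
theorem gowersNorm_nu_sub_one_small (k m₀ t₀ L : ℕ) (hk : 2 ≤ k)
    (hm₀ : 2 ^ k ≤ m₀) (ht₀ : k + 1 ≤ t₀) (hL : 1 ≤ L)
    (ν : ∀ N : ℕ, ZMod N → ℝ) (hpos : ∀ N x, 0 ≤ ν N x)
    (hlf : LinearFormsCondition m₀ t₀ L ν) :
    ∀ ε : ℝ, 0 < ε → ∃ N₀ : ℕ, ∀ N : ℕ, ∀ hN : N.Prime, N₀ < N →
      haveI : NeZero N := ⟨hN.pos.ne'⟩
      gowersNorm N k (fun x => ν N x - 1) ≤ ε := by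
  intro ε hε
  set K : ℕ := 2 ^ k with hKdef
  have hε' : (0:ℝ) < ε ^ K / 2 ^ K := by positivity
  obtain ⟨N₀, hN₀⟩ := hlf _ hε'
  refine ⟨N₀, fun N hNp hNbig => ?_⟩
  haveI : NeZero N := ⟨hNp.pos.ne'⟩
  show gowersNorm N k (fun x => ν N x - 1) ≤ ε
  set f : ZMod N → ℝ := fun x => ν N x - 1 with hf
  have hNpos : (0:ℝ) < (N:ℝ) := by exact_mod_cast hNp.pos
  set D : ℝ := (N:ℝ) ^ (k+1) with hDdef
  have hD : (0:ℝ) < D := by positivity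
  set T : Finset (Fin k → Bool) → ℝ :=
    fun S => ∑ x : ZMod N, ∑ t : Fin k → ZMod N,
      ∏ ω ∈ S, ν N (x + ∑ j, if ω j then t j else 0) with hT
  -- Step 1: each normalized T S is close to 1
  have key : ∀ S : Finset (Fin k → Bool), |T S / D - 1| ≤ ε ^ K / 2 ^ K := by
    intro S
    rcases S.eq_empty_or_nonempty with rfl | hS
    · have hTe : T ∅ = D := by
        simp only [hT, Finset.prod_empty, Finset.sum_const, Finset.card_univ, nsmul_eq_mul,
          mul_one, ZMod.card, Fintype.card_fun, Fintype.card_bool, Fintype.card_fin, hDdef]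
        push_cast
        ring
      rw [hTe, div_self hD.ne']
      simpa using hε'.le
    · set m : ℕ := S.card with hm
      set σ : Fin m → (Fin k → Bool) := fun i => ((S.equivFin.symm i : S) : Fin k → Bool) with hσ
      have hσinj : Function.Injective σ :=
        Subtype.coe_injective.comp S.equivFin.symm.injective
      set L' : Fin m → Fin (k+1) → ℤ :=
        fun i => Fin.cons 1 (fun j => if σ i j then 1 else 0) with hL'
      have happ := hN₀ N hNp hNbig m (k+1) (Finset.card_pos.mpr hS)
        (by
          calc m ≤ Fintype.card (Fin k → Bool) := by
                  simpa [Finset.card_univ] using Finset.card_le_univ S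
            _ = 2 ^ k := by simp
            _ ≤ m₀ := hm₀)
        (Nat.succ_pos k) ht₀ (fun _ => (0 : ZMod N)) L'
        (by
          intro i j
          refine Fin.cases ?_ ?_ j
          · simp only [hL', Fin.cons_zero]
            simpa using (by exact_mod_cast hL : (1:ℤ) ≤ (L:ℤ))
          · intro j'
            simp only [hL', Fin.cons_succ]
            split_ifs
            · simpa using (by exact_mod_cast hL : (1:ℤ) ≤ (L:ℤ))
            · simpa using (by positivity : (0:ℤ) ≤ (L:ℤ)))
        (by
          intro i h
          have h0 := congrFun h 0
          simp [hL'] at h0)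
        (by
          intro i i' hii q hEq
          have h0 := congrFun hEq 0
          simp only [hL', Fin.cons_zero, Int.cast_one, mul_one] at h0
          subst h0
          apply hii
          apply hσinj
          funext j
          have hj := congrFun hEq j.succ
          simp only [hL', Fin.cons_succ, one_mul] at hj
          by_cases h1 : σ i j <;> by_cases h2 : σ i' j <;>
            simp [h1, h2] at hj ⊢)
      -- identify the sum with T S
      have hsum : T S = ∑ y : Fin (k+1) → ZMod N,
          ∏ i : Fin m, ν N ((0 : ZMod N) + ∑ j, (L' i j : ZMod N) * y j) := by
        have h1 : T S = ∑ p : ZMod N × (Fin k → ZMod N),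
            ∏ ω ∈ S, ν N (p.1 + ∑ j, if ω j then p.2 j else 0) := by
          show (∑ x : ZMod N, ∑ t : Fin k → ZMod N,
              ∏ ω ∈ S, ν N (x + ∑ j, if ω j then t j else 0)) = _
          exact (Fintype.sum_prod_type (fun p : ZMod N × (Fin k → ZMod N) =>
            ∏ ω ∈ S, ν N (p.1 + ∑ j, if ω j then p.2 j else 0))).symm
        rw [h1]
        refine Fintype.sum_equiv (Fin.consEquiv fun _ => ZMod N) _ _ fun p => ?_
        have harg : ∀ i : Fin m,
            ((0 : ZMod N) + ∑ j, (L' i j : ZMod N) * (Fin.consEquiv fun _ => ZMod N) p j) =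
            p.1 + ∑ j, if σ i j then p.2 j else 0 := by
          intro i
          rw [zero_add, Fin.sum_univ_succ]
          simp only [hL', Fin.consEquiv_apply, Fin.cons_zero, Fin.cons_succ,
            Int.cast_one, one_mul]
          congr 1
          refine Finset.sum_congr rfl fun j _ => ?_
          split_ifs <;> simp
        calc (∏ ω ∈ S, ν N (p.1 + ∑ j, if ω j then p.2 j else 0))
            = ∏ a : {x // x ∈ S}, ν N (p.1 + ∑ j, if (a : Fin k → Bool) j then p.2 j else 0) :=
              (Finset.prod_coe_sort S _).symm
          _ = ∏ i : Fin m, ν N (p.1 + ∑ j, if σ i j then p.2 j else 0) := by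
              refine Fintype.prod_equiv S.equivFin _ _ fun a => ?_
              simp [hσ]
          _ = ∏ i : Fin m, ν N ((0 : ZMod N) + ∑ j, (L' i j : ZMod N)
                * (Fin.consEquiv fun _ => ZMod N) p j) :=
              Finset.prod_congr rfl fun i _ => by rw [harg i]
      rw [hsum, hDdef]
      exact happ
  -- Step 2: expand gowersPow
  have expand : gowersPow N k f = ∑ S ∈ (Finset.univ : Finset (Fin k → Bool)).powerset,
      (T S * (-1:ℝ) ^ ((Finset.univ \ S).card)) / D := by
    rw [gowersPow, ← Finset.sum_div]
    have hden : (N:ℝ) * (N:ℝ) ^ k = D := by rw [hDdef, pow_succ, mul_comm]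
    rw [hden]
    congr 1
    calc (∑ x : ZMod N, ∑ t : Fin k → ZMod N,
          ∏ ω : Fin k → Bool, f (x + ∑ j, if ω j then t j else 0))
        = ∑ x : ZMod N, ∑ t : Fin k → ZMod N,
            ∑ S ∈ (Finset.univ : Finset (Fin k → Bool)).powerset,
              (∏ ω ∈ S, ν N (x + ∑ j, if ω j then t j else 0)) *
                (-1:ℝ) ^ ((Finset.univ \ S).card) := by
          refine Finset.sum_congr rfl fun x _ => Finset.sum_congr rfl fun t _ => ?_
          have h := Finset.prod_add
            (fun ω : Fin k → Bool => ν N (x + ∑ j, if ω j then t j else 0))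
            (fun _ => (-1:ℝ)) Finset.univ
          simp only [Finset.prod_const] at h
          rw [← h]
          exact Finset.prod_congr rfl fun ω _ => by simp [hf, sub_eq_add_neg]
      _ = ∑ x : ZMod N, ∑ S ∈ (Finset.univ : Finset (Fin k → Bool)).powerset,
            ∑ t : Fin k → ZMod N,
              (∏ ω ∈ S, ν N (x + ∑ j, if ω j then t j else 0)) *
                (-1:ℝ) ^ ((Finset.univ \ S).card) :=
          Finset.sum_congr rfl fun x _ => Finset.sum_comm
      _ = ∑ S ∈ (Finset.univ : Finset (Fin k → Bool)).powerset,
            ∑ x : ZMod N, ∑ t : Fin k → ZMod N,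
              (∏ ω ∈ S, ν N (x + ∑ j, if ω j then t j else 0)) *
                (-1:ℝ) ^ ((Finset.univ \ S).card) :=
          Finset.sum_comm
      _ = ∑ S ∈ (Finset.univ : Finset (Fin k → Bool)).powerset,
            T S * (-1:ℝ) ^ ((Finset.univ \ S).card) := by
          refine Finset.sum_congr rfl fun S _ => ?_
          have hTS : T S = ∑ x : ZMod N, ∑ t : Fin k → ZMod N,
              ∏ ω ∈ S, ν N (x + ∑ j, if ω j then t j else 0) := rfl
          rw [hTS]
          simp only [Finset.sum_mul]
  -- Step 3: signs sum to zero
  have hzero : ∑ S ∈ (Finset.univ : Finset (Fin k → Bool)).powerset,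
      (-1:ℝ) ^ ((Finset.univ \ S).card) = 0 := by
    have h := Finset.prod_add (fun _ : Fin k → Bool => (1:ℝ)) (fun _ => (-1:ℝ)) Finset.univ
    simp only [Finset.prod_const, one_pow, one_mul] at h
    have hc : (Finset.univ : Finset (Fin k → Bool)).card ≠ 0 := by
      simp [Finset.card_univ]
    rw [← h, show (1:ℝ) + -1 = 0 by ring, zero_pow hc]
  have expand2 : gowersPow N k f =
      ∑ S ∈ (Finset.univ : Finset (Fin k → Bool)).powerset,
        (T S / D - 1) * (-1:ℝ) ^ ((Finset.univ \ S).card) := by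
    rw [expand]
    have hsplit : ∑ S ∈ (Finset.univ : Finset (Fin k → Bool)).powerset,
        (T S * (-1:ℝ) ^ ((Finset.univ \ S).card)) / D =
        (∑ S ∈ (Finset.univ : Finset (Fin k → Bool)).powerset,
          (T S / D - 1) * (-1:ℝ) ^ ((Finset.univ \ S).card)) +
        ∑ S ∈ (Finset.univ : Finset (Fin k → Bool)).powerset,
          (-1:ℝ) ^ ((Finset.univ \ S).card) := by
      rw [← Finset.sum_add_distrib]
      refine Finset.sum_congr rfl fun S _ => ?_
      field_simp
      ring
    rw [hsplit, hzero, add_zero]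
  -- Step 4: the bound on gowersPow
  have hbound : |gowersPow N k f| ≤ ε ^ K := by
    rw [expand2]
    calc |∑ S ∈ (Finset.univ : Finset (Fin k → Bool)).powerset,
          (T S / D - 1) * (-1:ℝ) ^ ((Finset.univ \ S).card)|
        ≤ ∑ S ∈ (Finset.univ : Finset (Fin k → Bool)).powerset,
          |(T S / D - 1) * (-1:ℝ) ^ ((Finset.univ \ S).card)| :=
          Finset.abs_sum_le_sum_abs _ _
      _ ≤ ∑ _S ∈ (Finset.univ : Finset (Fin k → Bool)).powerset, (ε ^ K / 2 ^ K) := by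
          refine Finset.sum_le_sum fun S _ => ?_
          rw [abs_mul, abs_pow, abs_neg, abs_one, one_pow, mul_one]
          exact key S
      _ = ε ^ K := by
          rw [Finset.sum_const, nsmul_eq_mul, Finset.card_powerset, Finset.card_univ]
          have hcard : Fintype.card (Fin k → Bool) = K := by simp [hKdef]
          rw [hcard]
          push_cast
          field_simp
  -- Step 5: conclude for the norm
  rw [gowersNorm]
  have h2k : ((2:ℝ) ^ k) = (K : ℝ) := by rw [hKdef]; push_cast; ring
  have hexp : (0:ℝ) ≤ (1:ℝ) / 2 ^ k := by positivity
  calc gowersPow N k f ^ ((1:ℝ) / 2 ^ k)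
      ≤ |gowersPow N k f ^ ((1:ℝ) / 2 ^ k)| := le_abs_self _
    _ ≤ |gowersPow N k f| ^ ((1:ℝ) / 2 ^ k) := Real.abs_rpow_le_abs_rpow _ _
    _ ≤ (ε ^ K) ^ ((1:ℝ) / 2 ^ k) := Real.rpow_le_rpow (abs_nonneg _) hbound hexp
    _ = ε := by
        rw [← Real.rpow_natCast ε K, ← Real.rpow_mul hε.le]
        rw [show (K:ℝ) * ((1:ℝ)/2^k) = 1 by rw [← h2k]; field_simp]
        exact Real.rpow_one ε
end

section
/- If ν is a pseudorandom measure and f : Z/NZ → ℝ satisfies |f(x)| ≤ 1 + ν(x) for all x, then the dual function satisfies ‖Df‖_{L^∞} ≤ 2^{2^k − 1} + o(1). -/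
/-- The dual function of order `k`:
`Df(x) = E(∏_{ω ∈ {0,1}^k, ω ≠ 0} f(x + ω·t) | t ∈ Z_N^k)`. -/
noncomputable def dualFn (N : ℕ) [NeZero N] (k : ℕ) (f : ZMod N → ℝ) (x : ZMod N) : ℝ :=
  (∑ t : Fin k → ZMod N,
    ∏ ω ∈ Finset.univ.filter (fun ω : Fin k → Bool => ω ≠ fun _ => false),
      f (x + ∑ j, if ω j then t j else 0)) / (N : ℝ) ^ k

/-- If `ν` is a pseudorandom family (satisfying the linear forms condition) and
`|f_N| ≤ 1 + ν_N` pointwise, then `‖Df_N‖_{L^∞} ≤ 2^{2^k - 1} + o(1)`. -/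
theorem dualFn_bounded (k m₀ t₀ L : ℕ) (hk : 2 ≤ k)
    (hm₀ : 2 ^ k ≤ m₀) (ht₀ : k + 1 ≤ t₀) (hL : 1 ≤ L)
    (ν : ∀ N : ℕ, ZMod N → ℝ) (hpos : ∀ N x, 0 ≤ ν N x)
    (hlf : LinearFormsCondition m₀ t₀ L ν)
    (f : ∀ N : ℕ, ZMod N → ℝ) (hf : ∀ N x, |f N x| ≤ 1 + ν N x) :
    ∀ ε : ℝ, 0 < ε → ∃ N₀ : ℕ, ∀ N : ℕ, ∀ hN : N.Prime, N₀ < N →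
      haveI : NeZero N := ⟨hN.pos.ne'⟩
      ∀ x : ZMod N, |dualFn N k (f N) x| ≤ 2 ^ (2 ^ k - 1) + ε := by
  intro ε hε
  have hC : (0 : ℝ) < 2 ^ (2 ^ k - 1) := by positivity
  obtain ⟨N₀, hN₀⟩ := hlf (ε / 2 ^ (2 ^ k - 1)) (by positivity)
  refine ⟨N₀, fun N hN hNN => ?_⟩
  haveI : NeZero N := ⟨hN.pos.ne'⟩
  intro x
  have hNpos : (0 : ℝ) < (N : ℝ) ^ k := by
    have : (0 : ℝ) < (N : ℝ) := by exact_mod_cast hN.pos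
    positivity
  set Ω : Finset (Fin k → Bool) :=
    Finset.univ.filter (fun ω : Fin k → Bool => ω ≠ fun _ => false) with hΩdef
  -- cardinality of Ω
  have hΩcard : Ω.card = 2 ^ k - 1 := by
    rw [hΩdef, Finset.filter_ne', Finset.card_erase_of_mem (Finset.mem_univ _),
      Finset.card_univ]
    simp [Fintype.card_fun]
  -- Step D : each subset average is at most `1 + ε / 2 ^ (2 ^ k - 1)`
  have hD : ∀ S ∈ Ω.powerset,
      (∑ t : Fin k → ZMod N, ∏ ω ∈ S, ν N (x + ∑ j, if ω j then t j else 0))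
        / (N : ℝ) ^ k ≤ 1 + ε / 2 ^ (2 ^ k - 1) := by
    intro S hS
    rw [Finset.mem_powerset] at hS
    rcases S.eq_empty_or_nonempty with rfl | hSne
    · have : (∑ _t : Fin k → ZMod N, (1 : ℝ)) = (N : ℝ) ^ k := by
        simp [Finset.sum_const, Finset.card_univ, Fintype.card_fun]
      simp only [Finset.prod_empty, this, div_self hNpos.ne']
      nlinarith [div_pos hε hC]
    · -- nonempty case: apply the linear forms condition
      have hm : 0 < S.card := Finset.card_pos.mpr hSne
      set e : Fin S.card → (Fin k → Bool) := fun i => (S.equivFin.symm i : Fin k → Bool)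
        with hedef
      have he_mem : ∀ i, e i ∈ S := fun i => (S.equivFin.symm i).2
      have he_inj : Function.Injective e :=
        fun i i' h => S.equivFin.symm.injective (Subtype.ext h)
      have he_ne : ∀ i, e i ≠ fun _ => false := by
        intro i
        have := hS (he_mem i)
        rw [hΩdef, Finset.mem_filter] at this
        exact this.2
      set L' : Fin S.card → Fin k → ℤ := fun i j => if e i j then 1 else 0 with hL'def
      have key := hN₀ N hN hNN S.card k hm
        (le_trans (le_trans (S.card_le_univ) (by simp [Fintype.card_fun])) hm₀)
        (by omega) (by omega) (fun _ => x) L'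
        (by
          intro i j
          by_cases h : e i j <;> simp [hL'def, h] <;> exact_mod_cast hL)
        (by
          intro i hzero
          obtain ⟨j, hj⟩ : ∃ j, e i j = true := by
            by_contra hcon
            push_neg at hcon
            exact he_ne i (funext fun j => by simpa using hcon j)
          have := congrFun hzero j
          simp [hL'def, hj] at this)
        (by
          intro i i' hii q hq
          have hne : e i ≠ e i' := fun h => hii (he_inj h)
          obtain ⟨j₀, hj₀⟩ : ∃ j, e i j = true := by
            by_contra hcon
            push_neg at hcon
            exact he_ne i (funext fun j => by simpa using hcon j)
          have h₀ := congrFun hq j₀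
          simp only [hL'def, hj₀, if_true] at h₀
          by_cases h' : e i' j₀
          · simp only [h', if_true] at h₀
            push_cast at h₀
            have hq1 : q = 1 := by linarith [h₀]
            apply hne
            funext j
            have hj := congrFun hq j
            simp only [hL'def, hq1, one_mul] at hj
            by_cases h1 : e i j <;> by_cases h2 : e i' j <;>
              simp [h1, h2] at hj ⊢ <;> norm_num at hj
          · simp [h'] at h₀)
      -- rewrite the sum in `key` to the desired form
      have hrw : (∑ t : Fin k → ZMod N,
          ∏ i, ν N ((fun _ => x) i + ∑ j, ((L' i j : ZMod N)) * t j)) =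
          ∑ t : Fin k → ZMod N, ∏ ω ∈ S, ν N (x + ∑ j, if ω j then t j else 0) := by
        refine Finset.sum_congr rfl fun t _ => ?_
        have hinner : ∀ ω : Fin k → Bool,
            (∑ j, ((if ω j then (1 : ℤ) else 0 : ℤ) : ZMod N) * t j) =
            ∑ j, if ω j then t j else 0 := by
          intro ω
          refine Finset.sum_congr rfl fun j _ => ?_
          by_cases h : ω j <;> simp [h]
        calc (∏ i, ν N (x + ∑ j, ((L' i j : ZMod N)) * t j))
            = ∏ i, ν N (x + ∑ j, if e i j then t j else 0) := by
              refine Finset.prod_congr rfl fun i _ => ?_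
              rw [hL'def]; rw [hinner (e i)]
          _ = ∏ a : {ω // ω ∈ S}, ν N (x + ∑ j, if (a : Fin k → Bool) j then t j else 0) :=
              Equiv.prod_comp S.equivFin.symm
                (fun a : S => ν N (x + ∑ j, if (a : Fin k → Bool) j then t j else 0))
          _ = ∏ ω ∈ S, ν N (x + ∑ j, if ω j then t j else 0) :=
              Finset.prod_coe_sort S (fun ω => ν N (x + ∑ j, if ω j then t j else 0))
      rw [hrw] at key
      have := abs_le.mp key
      linarith [this.2]
  -- Step A+B+C : pointwise bound and expansion of the product
  have habs : |∑ t : Fin k → ZMod N, ∏ ω ∈ Ω, f N (x + ∑ j, if ω j then t j else 0)|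
      ≤ ∑ t : Fin k → ZMod N, ∏ ω ∈ Ω, (1 + ν N (x + ∑ j, if ω j then t j else 0)) := by
    refine (Finset.abs_sum_le_sum_abs _ _).trans (Finset.sum_le_sum fun t _ => ?_)
    rw [Finset.abs_prod]
    exact Finset.prod_le_prod (fun ω _ => abs_nonneg _) (fun ω _ => hf N _)
  have hexpand : (∑ t : Fin k → ZMod N,
      ∏ ω ∈ Ω, (1 + ν N (x + ∑ j, if ω j then t j else 0))) =
      ∑ S ∈ Ω.powerset, ∑ t : Fin k → ZMod N,
        ∏ ω ∈ S, ν N (x + ∑ j, if ω j then t j else 0) := by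
    have : ∀ t : Fin k → ZMod N,
        (∏ ω ∈ Ω, (1 + ν N (x + ∑ j, if ω j then t j else 0))) =
        ∑ S ∈ Ω.powerset, ∏ ω ∈ S, ν N (x + ∑ j, if ω j then t j else 0) := by
      intro t
      have := Finset.prod_add (fun ω : Fin k → Bool =>
        ν N (x + ∑ j, if ω j then t j else 0)) (fun _ => (1 : ℝ)) Ω
      simp only [Finset.prod_const_one, mul_one] at this
      simpa [add_comm] using this
    rw [Finset.sum_congr rfl fun t _ => this t, Finset.sum_comm]
  have hfinal : |dualFn N k (f N) x| ≤
      ∑ S ∈ Ω.powerset, (∑ t : Fin k → ZMod N,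
        ∏ ω ∈ S, ν N (x + ∑ j, if ω j then t j else 0)) / (N : ℝ) ^ k := by
    rw [← Finset.sum_div]
    simp only [dualFn, ← hΩdef, abs_div, abs_of_pos hNpos]
    gcongr
    exact habs.trans (le_of_eq hexpand)
  calc |dualFn N k (f N) x|
      ≤ ∑ S ∈ Ω.powerset, (∑ t : Fin k → ZMod N,
        ∏ ω ∈ S, ν N (x + ∑ j, if ω j then t j else 0)) / (N : ℝ) ^ k := hfinal
    _ ≤ ∑ _S ∈ Ω.powerset, (1 + ε / 2 ^ (2 ^ k - 1)) := Finset.sum_le_sum hD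
    _ = (Ω.powerset.card : ℝ) * (1 + ε / 2 ^ (2 ^ k - 1)) := by
        rw [Finset.sum_const, nsmul_eq_mul]
    _ = 2 ^ (2 ^ k - 1) * (1 + ε / 2 ^ (2 ^ k - 1)) := by
        rw [Finset.card_powerset, hΩcard]; push_cast; ring
    _ = 2 ^ (2 ^ k - 1) + ε := by
        rw [mul_add, mul_one, mul_div_cancel₀ _ hC.ne']
end
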